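/- arXiv:2502.18854 — 7 statements merged into one kernel-verified Lean document; each statement's English description precedes it below -/
import Mathlib

section
/- Let ζ : ℝ → ℝ be a continuous even function with compact support contained in [−R, R] (R > 0), and suppose ζ satisfies the moment conditions of order n ≥ 0: for every y ∈ ℝ and every integer j with 0 ≤ j ≤ n, ∑_{ξ∈ℤ} ζ(ξ − y)(ξ − y)^j equals 1 if j = 0 and equals 0 if 1 ≤ j ≤ n (these sums are finite since ζ has compact support). Define χ_{ξ,ρ}(x) := ∫₀¹ ζ(ξ + tρ − x) dt for ξ ∈ ℤ, ρ ∈ ℝ, x ∈ ℝ. Then for every x ∈ ℝ, every ρ ∈ ℝ and every integer k with 0 ≤ k ≤ n, one has ∑_{ξ∈ℤ} χ_{ξ,ρ}(x) (ξ − x)^k = (−ρ)^k / (k + 1). -/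
open MeasureTheory

/-- Weighted moment identity for the bond weight function
`χ ξ ρ x = ∫₀¹ ζ(ξ + tρ − x) dt` (Lemma 4.1 ingredient):
`∑_{ξ∈ℤ} χ_{ξ,ρ}(x) (ξ − x)^k = (−ρ)^k/(k+1)` for `0 ≤ k ≤ n`. -/
theorem stmt_1 (R : ℝ) (hR : 0 < R) (ζ : ℝ → ℝ) (hζc : Continuous ζ)
    (hζe : ∀ x, ζ (-x) = ζ x)
    (hζs : ∀ x, x ∉ Set.Icc (-R) R → ζ x = 0)
    (n : ℕ)
    (hmom : ∀ (y : ℝ) (j : ℕ), j ≤ n →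
      ∑' ξ : ℤ, ζ ((ξ : ℝ) - y) * ((ξ : ℝ) - y) ^ j = if j = 0 then 1 else 0)
    (χ : ℤ → ℝ → ℝ → ℝ)
    (hχ : ∀ (ξ : ℤ) (ρ x : ℝ), χ ξ ρ x = ∫ t in (0:ℝ)..1, ζ ((ξ : ℝ) + t * ρ - x)) :
    ∀ (x ρ : ℝ) (k : ℕ), k ≤ n →
      ∑' ξ : ℤ, χ ξ ρ x * ((ξ : ℝ) - x) ^ k = (-ρ) ^ k / (k + 1) := by
  intro x ρ k hk
  set M : ℝ := R + |ρ| with hM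
  set S : Finset ℤ := Finset.Icc ⌈x - M⌉ ⌊x + M⌋ with hS
  -- outside S the integrand vanishes on [0,1]
  have hout : ∀ ξ : ℤ, ξ ∉ S → ∀ t : ℝ, t ∈ Set.Icc (0:ℝ) 1 →
      ζ ((ξ : ℝ) + t * ρ - x) = 0 := by
    intro ξ hξ t ht
    apply hζs
    intro hmem
    apply hξ
    rw [hS, Finset.mem_Icc]
    have h1 : |(ξ : ℝ) + t * ρ - x| ≤ R := abs_le.2 ⟨hmem.1, hmem.2⟩
    have h2 : |t * ρ| ≤ |ρ| := by
      rw [abs_mul, abs_of_nonneg ht.1]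
      nlinarith [abs_nonneg ρ, ht.2]
    have h3 : |(ξ : ℝ) - x| ≤ M := by
      have : (ξ : ℝ) - x = ((ξ : ℝ) + t * ρ - x) + (-(t * ρ)) := by ring
      rw [this]
      calc |((ξ : ℝ) + t * ρ - x) + (-(t * ρ))| ≤ |(ξ:ℝ) + t*ρ - x| + |-(t*ρ)| :=
            abs_add_le _ _
        _ ≤ R + |ρ| := by rw [abs_neg]; exact add_le_add h1 h2
    have h4 := abs_le.1 h3
    constructor
    · rw [Int.ceil_le]; linarith [h4.1]
    · rw [Int.le_floor]; linarith [h4.2]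
  have hχ0 : ∀ ξ : ℤ, ξ ∉ S → χ ξ ρ x = 0 := by
    intro ξ hξ
    rw [hχ]
    have heq : Set.EqOn (fun t => ζ ((ξ:ℝ) + t * ρ - x)) (fun _ => (0:ℝ))
        (Set.uIcc (0:ℝ) 1) := by
      intro t ht
      rw [Set.uIcc_of_le zero_le_one] at ht
      exact hout ξ hξ t ht
    rw [intervalIntegral.integral_congr heq, intervalIntegral.integral_zero]
  rw [tsum_eq_sum (s := S) (fun ξ hξ => by rw [hχ0 ξ hξ, zero_mul])]
  have hstep : ∀ ξ ∈ S, χ ξ ρ x * ((ξ:ℝ) - x) ^ k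
      = ∫ t in (0:ℝ)..1, ζ ((ξ:ℝ) + t * ρ - x) * ((ξ:ℝ) - x) ^ k := by
    intro ξ _
    rw [hχ, ← intervalIntegral.integral_mul_const]
  rw [Finset.sum_congr rfl hstep, ← intervalIntegral.integral_finset_sum]
  · have key : Set.EqOn (fun t => ∑ ξ ∈ S, ζ ((ξ:ℝ) + t * ρ - x) * ((ξ:ℝ) - x) ^ k)
        (fun t => (-(t * ρ)) ^ k) (Set.uIcc (0:ℝ) 1) := by
      intro t ht
      rw [Set.uIcc_of_le zero_le_one] at ht
      simp only
      set y : ℝ := x - t * ρ with hy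
      have harg : ∀ ξ : ℤ, (ξ:ℝ) + t * ρ - x = (ξ:ℝ) - y := by intro ξ; rw [hy]; ring
      calc ∑ ξ ∈ S, ζ ((ξ:ℝ) + t * ρ - x) * ((ξ:ℝ) - x) ^ k
          = ∑ ξ ∈ S, ζ ((ξ:ℝ) - y) *
              (∑ j ∈ Finset.range (k+1),
                ((ξ:ℝ) - y) ^ j * (-(t*ρ)) ^ (k - j) * (k.choose j)) := by
            apply Finset.sum_congr rfl
            intro ξ _
            rw [harg ξ]
            congr 1
            have : (ξ:ℝ) - x = ((ξ:ℝ) - y) + (-(t*ρ)) := by rw [hy]; ring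
            rw [this, add_pow]
        _ = ∑ j ∈ Finset.range (k+1),
              (-(t*ρ)) ^ (k - j) * (k.choose j) *
                ∑ ξ ∈ S, ζ ((ξ:ℝ) - y) * ((ξ:ℝ) - y) ^ j := by
            simp_rw [Finset.mul_sum]
            rw [Finset.sum_comm]
            apply Finset.sum_congr rfl
            intro j _
            apply Finset.sum_congr rfl
            intro ξ _
            ring
        _ = ∑ j ∈ Finset.range (k+1),
              (-(t*ρ)) ^ (k - j) * (k.choose j) * (if j = 0 then 1 else 0) := by
            apply Finset.sum_congr rfl
            intro j hj
            congr 1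
            have hjn : j ≤ n := le_trans (Nat.lt_succ_iff.1 (Finset.mem_range.1 hj)) hk
            rw [← hmom y j hjn]
            exact (tsum_eq_sum (fun ξ hξ => by
              rw [← harg ξ, hout ξ hξ t ht, zero_mul])).symm
        _ = (-(t*ρ)) ^ k := by
            rw [Finset.sum_eq_single 0 (fun j _ hj => by simp [hj]) (by simp)]
            simp
    rw [intervalIntegral.integral_congr key]
    have : ∀ t : ℝ, (-(t * ρ)) ^ k = (-ρ) ^ k * t ^ k := by
      intro t
      rw [show -(t * ρ) = (-ρ) * t by ring, mul_pow]
    simp_rw [this]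
    rw [intervalIntegral.integral_const_mul, integral_pow]
    push_cast
    ring
  · intro ξ _
    exact ((hζc.comp (by continuity)).mul continuous_const).intervalIntegrable 0 1
end

section
/- Let ζ : ℝ → ℝ be a continuous even function with compact support contained in [−R, R] (R > 0), and suppose ζ satisfies the moment conditions of order n ≥ 0: for every y ∈ ℝ and every integer j with 0 ≤ j ≤ n, ∑_{ξ∈ℤ} ζ(ξ − y)(ξ − y)^j equals 1 if j = 0 and equals 0 if 1 ≤ j ≤ n. Then for every x ∈ ℝ, every ρ ∈ ℝ, every t ∈ [0,1] and every integer k with 0 ≤ k ≤ n, one has ∑_{ξ∈ℤ} ζ(ξ + tρ − x)(ξ − x)^k = (−tρ)^k. -/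
open MeasureTheory

/-- Shifted moment identity:
`∑_{ξ∈ℤ} ζ(ξ + tρ − x)(ξ − x)^k = (−tρ)^k` for `0 ≤ k ≤ n`, `t ∈ [0,1]`. -/
theorem stmt_2 (R : ℝ) (hR : 0 < R) (ζ : ℝ → ℝ) (hζc : Continuous ζ)
    (hζe : ∀ x, ζ (-x) = ζ x)
    (hζs : ∀ x, x ∉ Set.Icc (-R) R → ζ x = 0)
    (n : ℕ)
    (hmom : ∀ (y : ℝ) (j : ℕ), j ≤ n →
      ∑' ξ : ℤ, ζ ((ξ : ℝ) - y) * ((ξ : ℝ) - y) ^ j = if j = 0 then 1 else 0) :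
    ∀ (x ρ t : ℝ), t ∈ Set.Icc (0:ℝ) 1 → ∀ (k : ℕ), k ≤ n →
      ∑' ξ : ℤ, ζ ((ξ : ℝ) + t * ρ - x) * ((ξ : ℝ) - x) ^ k = (-(t * ρ)) ^ k := by
  intro x ρ t ht k hk
  set y : ℝ := x - t * ρ with hy
  -- summability of each moment term
  have hsum : ∀ m : ℕ, Summable (fun ξ : ℤ => ζ ((ξ : ℝ) - y) * ((ξ : ℝ) - y) ^ m) := by
    intro m
    apply summable_of_ne_finset_zero (s := Finset.Icc ⌈y - R⌉ ⌊y + R⌋)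
    intro ξ hξ
    have : ζ ((ξ : ℝ) - y) = 0 := by
      apply hζs
      intro hmem
      apply hξ
      simp only [Set.mem_Icc] at hmem
      rw [Finset.mem_Icc]
      constructor
      · exact Int.ceil_le.mpr (by linarith [hmem.1])
      · exact Int.le_floor.mpr (by linarith [hmem.2])
    simp [this]
  -- rewrite summand via binomial expansion
  have hexp : ∀ ξ : ℤ,
      ζ ((ξ : ℝ) + t * ρ - x) * ((ξ : ℝ) - x) ^ k
        = ∑ m ∈ Finset.range (k + 1),
            ζ ((ξ : ℝ) - y) * ((ξ : ℝ) - y) ^ m * ((-(t * ρ)) ^ (k - m) * (k.choose m)) := by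
    intro ξ
    have h1 : (ξ : ℝ) + t * ρ - x = (ξ : ℝ) - y := by rw [hy]; ring
    have h2 : (ξ : ℝ) - x = ((ξ : ℝ) - y) + (-(t * ρ)) := by rw [hy]; ring
    rw [h1, h2, add_pow, Finset.mul_sum]
    refine Finset.sum_congr rfl fun m hm => by ring
  calc ∑' ξ : ℤ, ζ ((ξ : ℝ) + t * ρ - x) * ((ξ : ℝ) - x) ^ k
      = ∑' ξ : ℤ, ∑ m ∈ Finset.range (k + 1),
          ζ ((ξ : ℝ) - y) * ((ξ : ℝ) - y) ^ m * ((-(t * ρ)) ^ (k - m) * (k.choose m)) := by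
        exact tsum_congr hexp
    _ = ∑ m ∈ Finset.range (k + 1),
          ∑' ξ : ℤ, ζ ((ξ : ℝ) - y) * ((ξ : ℝ) - y) ^ m * ((-(t * ρ)) ^ (k - m) * (k.choose m)) := by
        exact Summable.tsum_finsetSum fun m _ => (hsum m).mul_right _
    _ = ∑ m ∈ Finset.range (k + 1),
          (if m = 0 then (1:ℝ) else 0) * ((-(t * ρ)) ^ (k - m) * (k.choose m)) := by
        refine Finset.sum_congr rfl fun m hm => ?_
        rw [tsum_mul_right, hmom y m (le_trans (Nat.lt_succ_iff.mp (Finset.mem_range.mp hm)) hk)]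
    _ = (-(t * ρ)) ^ k := by
        rw [Finset.sum_eq_single 0]
        · simp
        · intro m _ hm; simp [hm]
        · intro h; simp at h
end

section
/- Let ζ : ℝ → ℝ be a continuous even function with compact support contained in [−R, R] (R > 0), satisfying the moment conditions of order 2: for every y ∈ ℝ, ∑_{ξ∈ℤ} ζ(ξ − y)(ξ − y)^j equals 1 if j = 0 and equals 0 if j = 1, 2. Define χ_{ξ,ρ}(x) := ∫₀¹ ζ(ξ + tρ − x) dt. Then for every x ∈ ℝ and every ρ ∈ ℝ, ∑_{ξ∈ℤ} (ξ − x + ρ/2)(ξ − x) χ_{ξ,ρ}(x) = ρ²/12. -/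
/-!
For fixed `t`, the weights `ξ ↦ ζ(ξ + tρ − x)` have moments `1, 0, 0` about `y = x − tρ`, so they
integrate every quadratic polynomial `q` exactly: `∑ q(ξ) ζ(ξ − y) = q(y)`. With
`q(ξ) = (ξ − x + ρ/2)(ξ − x)` this gives `tρ(tρ − ρ/2)` for every `t`, and integrating over
`t ∈ [0, 1]` yields `ρ²/3 − ρ²/4 = ρ²/12`. All sums involved are finite because `ζ` has
compact support, which justifies exchanging the sum with the integral defining `χ`.
-/

open MeasureTheory

theorem Finset.sum_sub_mul_sub_mul_eq_of_moments {ι : Type*} (S : Finset ι) (w u : ι → ℝ)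
    (y p q : ℝ) (h₀ : ∑ i ∈ S, w i = 1) (h₁ : ∑ i ∈ S, w i * (u i - y) = 0)
    (h₂ : ∑ i ∈ S, w i * (u i - y) ^ 2 = 0) :
    ∑ i ∈ S, (u i - p) * (u i - q) * w i = (y - p) * (y - q) := by
  have hsplit : ∀ i ∈ S, (u i - p) * (u i - q) * w i =
      w i * (u i - y) ^ 2 + (2 * y - p - q) * (w i * (u i - y)) + (y - p) * (y - q) * w i :=
    fun i _ => by ring
  rw [Finset.sum_congr rfl hsplit, Finset.sum_add_distrib, Finset.sum_add_distrib,
    ← Finset.mul_sum, ← Finset.mul_sum, h₀, h₁, h₂]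
  ring

noncomputable def latticeWindow (y A : ℝ) : Finset ℤ := Finset.Icc ⌊y - A⌋ ⌈y + A⌉

theorem mem_latticeWindow_of_abs_sub_le {ξ : ℤ} {y A : ℝ} (h : |(ξ : ℝ) - y| ≤ A) :
    ξ ∈ latticeWindow y A := by
  rw [abs_le] at h
  refine Finset.mem_Icc.2 ⟨Int.floor_le_iff.2 ?_, Int.le_ceil_iff.2 ?_⟩ <;> linarith

theorem eq_zero_of_notMem_latticeWindow {ζ : ℝ → ℝ} {R r x y : ℝ}
    (hζs : ∀ x, x ∉ Set.Icc (-R) R → ζ x = 0) {ξ : ℤ} (hξ : ξ ∉ latticeWindow x (R + r))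
    (hy : |y - x| ≤ r) : ζ ((ξ : ℝ) - y) = 0 := by
  refine hζs _ fun hmem => hξ (mem_latticeWindow_of_abs_sub_le ?_)
  calc |(ξ : ℝ) - x| = |((ξ : ℝ) - y) + (y - x)| := by ring_nf
    _ ≤ |(ξ : ℝ) - y| + |y - x| := abs_add_le _ _
    _ ≤ R + r := add_le_add (abs_le.2 hmem) hy

theorem abs_mul_le_abs_of_mem_uIcc {t : ℝ} (ρ : ℝ) (ht : t ∈ Set.uIcc (0 : ℝ) 1) :
    |t * ρ| ≤ |ρ| := by
  rw [Set.uIcc_of_le zero_le_one] at ht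
  rw [abs_mul, abs_of_nonneg ht.1]
  exact mul_le_of_le_one_left (abs_nonneg ρ) ht.2

theorem integral_mul_mul_sub_half (ρ : ℝ) :
    ∫ t in (0:ℝ)..1, t * ρ * (t * ρ - ρ / 2) = ρ ^ 2 / 12 := by
  simp only [show ∀ t : ℝ, t * ρ * (t * ρ - ρ / 2) = ρ ^ 2 * t ^ 2 - ρ ^ 2 / 2 * t from
    fun t => by ring]
  rw [intervalIntegral.integral_sub (Continuous.intervalIntegrable (by fun_prop) _ _)
      (Continuous.intervalIntegrable (by fun_prop) _ _),
    intervalIntegral.integral_const_mul, intervalIntegral.integral_const_mul,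
    integral_pow, integral_id]
  ring

section Moments

variable {ζ : ℝ → ℝ} {R : ℝ} (hζs : ∀ x, x ∉ Set.Icc (-R) R → ζ x = 0)
  (hmom : ∀ (y : ℝ) (j : ℕ), j ≤ 2 →
    ∑' ξ : ℤ, ζ ((ξ : ℝ) - y) * ((ξ : ℝ) - y) ^ j = if j = 0 then 1 else 0)
include hζs hmom

theorem sum_latticeWindow_moment {x y r : ℝ} (hy : |y - x| ≤ r) {j : ℕ} (hj : j ≤ 2) :
    ∑ ξ ∈ latticeWindow x (R + r), ζ ((ξ : ℝ) - y) * ((ξ : ℝ) - y) ^ j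
      = if j = 0 then 1 else 0 := by
  rw [← hmom y j hj, tsum_eq_sum fun ξ hξ => by
    rw [eq_zero_of_notMem_latticeWindow hζs hξ hy, zero_mul]]

theorem sum_latticeWindow_sub_mul_sub_mul {x y r : ℝ} (hy : |y - x| ≤ r) (p q : ℝ) :
    ∑ ξ ∈ latticeWindow x (R + r), ((ξ : ℝ) - p) * ((ξ : ℝ) - q) * ζ ((ξ : ℝ) - y)
      = (y - p) * (y - q) := by
  refine Finset.sum_sub_mul_sub_mul_eq_of_moments _ _ _ _ _ _ ?_ ?_ ?_
  · simpa using sum_latticeWindow_moment hζs hmom hy (j := 0) (by norm_num)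
  · simpa using sum_latticeWindow_moment hζs hmom hy (j := 1) (by norm_num)
  · simpa using sum_latticeWindow_moment hζs hmom hy (j := 2) (by norm_num)

end Moments

theorem stmt_3_general (R : ℝ) (ζ : ℝ → ℝ) (hζc : Continuous ζ)
    (hζs : ∀ x, x ∉ Set.Icc (-R) R → ζ x = 0)
    (hmom : ∀ (y : ℝ) (j : ℕ), j ≤ 2 →
      ∑' ξ : ℤ, ζ ((ξ : ℝ) - y) * ((ξ : ℝ) - y) ^ j = if j = 0 then 1 else 0)
    (χ : ℤ → ℝ → ℝ → ℝ)
    (hχ : ∀ (ξ : ℤ) (ρ x : ℝ), χ ξ ρ x = ∫ t in (0:ℝ)..1, ζ ((ξ : ℝ) + t * ρ - x)) :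
    ∀ (x ρ : ℝ),
      ∑' ξ : ℤ, ((ξ : ℝ) - x + ρ / 2) * ((ξ : ℝ) - x) * χ ξ ρ x = ρ ^ 2 / 12 := by
  intro x ρ
  set S := latticeWindow x (R + |ρ|)
  have hshift : ∀ (ξ : ℤ) (t : ℝ), (ξ : ℝ) + t * ρ - x = ξ - (x - t * ρ) := fun _ _ => by ring
  have hcentre : ∀ ξ : ℤ, (ξ : ℝ) - x + ρ / 2 = ξ - (x - ρ / 2) := fun _ => by ring
  have hnear : ∀ t ∈ Set.uIcc (0 : ℝ) 1, |x - t * ρ - x| ≤ |ρ| := fun t ht => by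
    simpa [abs_neg] using abs_mul_le_abs_of_mem_uIcc ρ ht
  have hχS : ∀ ξ ∉ S, χ ξ ρ x = 0 := fun ξ hξ => by
    rw [hχ, intervalIntegral.integral_congr (g := fun _ => (0 : ℝ)) fun t ht => by
      rw [hshift, eq_zero_of_notMem_latticeWindow hζs hξ (hnear t ht)]]
    simp
  have hpointwise : ∀ t ∈ Set.uIcc (0 : ℝ) 1,
      ∑ ξ ∈ S, ((ξ : ℝ) - x + ρ / 2) * ((ξ : ℝ) - x) * ζ ((ξ : ℝ) + t * ρ - x)
        = t * ρ * (t * ρ - ρ / 2) := fun t ht => by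
    simp only [hshift, hcentre]
    rw [sum_latticeWindow_sub_mul_sub_mul hζs hmom (hnear t ht)]
    ring
  calc ∑' ξ : ℤ, ((ξ : ℝ) - x + ρ / 2) * ((ξ : ℝ) - x) * χ ξ ρ x
      = ∑ ξ ∈ S, ((ξ : ℝ) - x + ρ / 2) * ((ξ : ℝ) - x) * χ ξ ρ x :=
        tsum_eq_sum fun ξ hξ => by rw [hχS ξ hξ, mul_zero]
    _ = ∫ t in (0:ℝ)..1,
          ∑ ξ ∈ S, ((ξ : ℝ) - x + ρ / 2) * ((ξ : ℝ) - x) * ζ ((ξ : ℝ) + t * ρ - x) := by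
        rw [intervalIntegral.integral_finsetSum fun ξ _ =>
          Continuous.intervalIntegrable (by fun_prop) _ _]
        simp only [hχ, intervalIntegral.integral_const_mul]
    _ = ρ ^ 2 / 12 := by
        rw [intervalIntegral.integral_congr hpointwise, integral_mul_mul_sub_half]

/-- Combined second-moment identity for the bond weight function:
`∑_{ξ∈ℤ} (ξ − x + ρ/2)(ξ − x) χ_{ξ,ρ}(x) = ρ²/12`. -/
theorem stmt_3 (R : ℝ) (hR : 0 < R) (ζ : ℝ → ℝ) (hζc : Continuous ζ)
    (hζe : ∀ x, ζ (-x) = ζ x)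
    (hζs : ∀ x, x ∉ Set.Icc (-R) R → ζ x = 0)
    (hmom : ∀ (y : ℝ) (j : ℕ), j ≤ 2 →
      ∑' ξ : ℤ, ζ ((ξ : ℝ) - y) * ((ξ : ℝ) - y) ^ j = if j = 0 then 1 else 0)
    (χ : ℤ → ℝ → ℝ → ℝ)
    (hχ : ∀ (ξ : ℤ) (ρ x : ℝ), χ ξ ρ x = ∫ t in (0:ℝ)..1, ζ ((ξ : ℝ) + t * ρ - x)) :
    ∀ (x ρ : ℝ),
      ∑' ξ : ℤ, ((ξ : ℝ) - x + ρ / 2) * ((ξ : ℝ) - x) * χ ξ ρ x = ρ ^ 2 / 12 :=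
  stmt_3_general R ζ hζc hζs hmom χ hχ
end

section
/- Let ζ : ℝ → ℝ be a continuous even function with compact support contained in [−R, R] (R > 0), and let w : ℝ → ℝ be continuously differentiable with compact support. Define the convolution (ζ ∗ w)(s) := ∫_ℝ ζ(s − x) w(x) dx and χ_{ξ,ρ}(x) := ∫₀¹ ζ(ξ + tρ − x) dt. Then for every ξ ∈ ℤ and every ρ ∈ ℝ, (ζ ∗ w)(ξ + ρ) − (ζ ∗ w)(ξ) = ρ ∫_ℝ χ_{ξ,ρ}(x) w′(x) dx. -/
open MeasureTheory Convolution

/-- Representation of the finite difference of the smoothed interpolant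
`ṽ = ζ ∗ w` as a weighted integral of the gradient:
`(ζ∗w)(ξ+ρ) − (ζ∗w)(ξ) = ρ ∫ χ_{ξ,ρ}(x) w′(x) dx`. -/
theorem stmt_4 (R : ℝ) (hR : 0 < R) (ζ : ℝ → ℝ) (hζc : Continuous ζ)
    (hζe : ∀ x, ζ (-x) = ζ x)
    (hζs : ∀ x, x ∉ Set.Icc (-R) R → ζ x = 0)
    (w : ℝ → ℝ) (hw : ContDiff ℝ 1 w) (hwsupp : HasCompactSupport w)
    (conv : ℝ → ℝ) (hconv : ∀ s, conv s = ∫ x : ℝ, ζ (s - x) * w x)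
    (χ : ℤ → ℝ → ℝ → ℝ)
    (hχ : ∀ (ξ : ℤ) (ρ x : ℝ), χ ξ ρ x = ∫ t in (0:ℝ)..1, ζ ((ξ : ℝ) + t * ρ - x)) :
    ∀ (ξ : ℤ) (ρ : ℝ),
      conv ((ξ : ℝ) + ρ) - conv (ξ : ℝ) = ρ * ∫ x : ℝ, χ ξ ρ x * deriv w x := by
  intro ξ ρ
  have hζsupp : HasCompactSupport ζ := HasCompactSupport.intro isCompact_Icc hζs
  have hζli : LocallyIntegrable ζ := hζc.locallyIntegrable
  have hw' : Continuous (deriv w) := hw.continuous_deriv le_rfl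
  have hw'supp : HasCompactSupport (deriv w) := hwsupp.deriv
  have hw'int : Integrable (deriv w) := hw'.integrable_of_hasCompactSupport hw'supp
  -- conv agrees with the mathlib convolution
  have hconv_eq : ∀ s, conv s = (ζ ⋆ w) s := by
    intro s
    have h := MeasureTheory.integral_sub_left_eq_self (fun u => ζ u * w (s - u)) volume s
    simp only [sub_sub_cancel] at h
    rw [hconv, convolution_def]
    simpa using h
  -- the convolution with deriv w, pointwise
  have hconv'_eq : ∀ s, (ζ ⋆ deriv w) s = ∫ x : ℝ, ζ (s - x) * deriv w x := by
    intro s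
    have h := MeasureTheory.integral_sub_left_eq_self
      (fun u => ζ u * deriv w (s - u)) volume s
    simp only [sub_sub_cancel] at h
    rw [convolution_def]
    simpa using h.symm
  -- derivative of the convolution
  have hder : ∀ s : ℝ, HasDerivAt (ζ ⋆ w) ((ζ ⋆ deriv w) s) s := fun s =>
    hwsupp.hasDerivAt_convolution_right (ContinuousLinearMap.lsmul ℝ ℝ) hζli hw s
  have hcontconv' : Continuous (ζ ⋆ deriv w) :=
    hw'supp.continuous_convolution_right (ContinuousLinearMap.lsmul ℝ ℝ) hζli hw'
  -- FTC along the segment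
  have hftc :
      (ζ ⋆ w) ((ξ : ℝ) + 1 * ρ) - (ζ ⋆ w) ((ξ : ℝ) + 0 * ρ) =
        ∫ t in (0:ℝ)..1, (ζ ⋆ deriv w) ((ξ : ℝ) + t * ρ) * ρ := by
    refine (intervalIntegral.integral_eq_sub_of_hasDerivAt
      (f := fun t : ℝ => (ζ ⋆ w) ((ξ : ℝ) + t * ρ)) (fun t _ => ?_) ?_).symm
    · have h1 : HasDerivAt (fun t : ℝ => (ξ : ℝ) + t * ρ) ρ t := by
        simpa using ((hasDerivAt_id t).mul_const ρ).const_add (ξ : ℝ)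
      exact (hder ((ξ : ℝ) + t * ρ)).comp t h1
    · exact ((hcontconv'.comp (continuous_const.add (continuous_id.mul continuous_const))).mul continuous_const).intervalIntegrable 0 1
  -- Fubini setup
  obtain ⟨C, hCb⟩ := hζsupp.exists_bound_of_continuous hζc
  have hC0 : 0 ≤ C := le_trans (norm_nonneg _) (hCb 0)
  have hfin : IsFiniteMeasure (volume.restrict (Set.Ioc (0:ℝ) 1)) := by
    constructor
    simp [Real.volume_Ioc]
  have hdom : Integrable (fun p : ℝ × ℝ => C * ‖deriv w p.2‖)
      ((volume.restrict (Set.Ioc (0:ℝ) 1)).prod volume) :=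
    Integrable.mul_prod (integrable_const C) hw'int.norm
  have hmeas : Continuous (fun p : ℝ × ℝ => ζ ((ξ : ℝ) + p.1 * ρ - p.2) * deriv w p.2) := by
    exact (hζc.comp ((continuous_const.add (continuous_fst.mul continuous_const)).sub continuous_snd)).mul (hw'.comp continuous_snd)
  have hint : Integrable (fun p : ℝ × ℝ => ζ ((ξ : ℝ) + p.1 * ρ - p.2) * deriv w p.2)
      ((volume.restrict (Set.Ioc (0:ℝ) 1)).prod volume) := by
    refine hdom.mono hmeas.aestronglyMeasurable (Filter.Eventually.of_forall fun p => ?_)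
    have h1 : ‖ζ ((ξ : ℝ) + p.1 * ρ - p.2) * deriv w p.2‖ ≤ C * ‖deriv w p.2‖ := by
      rw [norm_mul]
      exact mul_le_mul_of_nonneg_right (hCb _) (norm_nonneg _)
    calc ‖ζ ((ξ : ℝ) + p.1 * ρ - p.2) * deriv w p.2‖ ≤ C * ‖deriv w p.2‖ := h1
      _ ≤ ‖C * ‖deriv w p.2‖‖ := le_abs_self _
  have hswap :
      ∫ t in Set.Ioc (0:ℝ) 1, ∫ x : ℝ, ζ ((ξ : ℝ) + t * ρ - x) * deriv w x =
        ∫ x : ℝ, ∫ t in Set.Ioc (0:ℝ) 1, ζ ((ξ : ℝ) + t * ρ - x) * deriv w x :=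
    MeasureTheory.integral_integral_swap hint
  -- put everything together
  rw [hconv_eq, hconv_eq]
  have e0 : (ξ : ℝ) + 0 * ρ = (ξ : ℝ) := by ring
  have e1 : (ξ : ℝ) + 1 * ρ = (ξ : ℝ) + ρ := by ring
  rw [← e1, ← (by rw [e0] : (ζ ⋆ w) ((ξ:ℝ) + 0 * ρ) = (ζ ⋆ w) (ξ:ℝ)), hftc]
  have step1 : (∫ t in (0:ℝ)..1, (ζ ⋆ deriv w) ((ξ : ℝ) + t * ρ) * ρ) =
      (∫ t in (0:ℝ)..1, (ζ ⋆ deriv w) ((ξ : ℝ) + t * ρ)) * ρ :=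
    intervalIntegral.integral_mul_const ρ _
  rw [step1, mul_comm]
  congr 1
  calc (∫ t in (0:ℝ)..1, (ζ ⋆ deriv w) ((ξ : ℝ) + t * ρ))
      = ∫ t in Set.Ioc (0:ℝ) 1, ∫ x : ℝ, ζ ((ξ : ℝ) + t * ρ - x) * deriv w x := by
        rw [intervalIntegral.integral_of_le zero_le_one]
        exact setIntegral_congr_fun measurableSet_Ioc fun t _ => hconv'_eq _
    _ = ∫ x : ℝ, ∫ t in Set.Ioc (0:ℝ) 1, ζ ((ξ : ℝ) + t * ρ - x) * deriv w x := hswap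
    _ = ∫ x : ℝ, χ ξ ρ x * deriv w x := by
        refine integral_congr_ae (Filter.Eventually.of_forall fun x => ?_)
        show (∫ t in Set.Ioc (0:ℝ) 1, ζ ((ξ:ℝ) + t * ρ - x) * deriv w x) = χ ξ ρ x * deriv w x
        rw [hχ, ← intervalIntegral.integral_mul_const,
          intervalIntegral.integral_of_le zero_le_one]
end

section
/- Let ζ : ℝ → ℝ be a continuous even function with compact support contained in [−R, R] (R > 0), let 𝓡 be a finite set of positive integers, let φ_ρ : ℝ → ℝ be differentiable for each ρ ∈ 𝓡, let u : ℤ → ℝ be arbitrary, and let w : ℝ → ℝ be continuously differentiable with compact support. Define D_ρ u(ξ) := u(ξ + ρ) − u(ξ), χ_{ξ,ρ}(x) := ∫₀¹ ζ(ξ + tρ − x) dt, the convolution (ζ ∗ w)(s) := ∫_ℝ ζ(s − x) w(x) dx, and the atomistic stress S^a(u; x) := ∑_{ξ∈ℤ} ∑_{ρ∈𝓡} ρ φ′_ρ(D_ρ u(ξ)) χ_{ξ,ρ}(x) (for each x a finite sum, since ζ has compact support). Then ∑_{ξ∈ℤ} ∑_{ρ∈𝓡} φ′_ρ(D_ρ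 u(ξ)) [(ζ ∗ w)(ξ + ρ) − (ζ ∗ w)(ξ)] = ∫_ℝ S^a(u; x) w′(x) dx, where the sum on the left has only finitely many nonzero terms since ζ ∗ w has compact support. -/
open MeasureTheory
open scoped Convolution

private lemma zeta_zero {R : ℝ} {ζ : ℝ → ℝ} (hζs : ∀ x, x ∉ Set.Icc (-R) R → ζ x = 0)
    {y : ℝ} (hy : R < |y|) : ζ y = 0 :=
  hζs y fun hmem => absurd (abs_le.mpr (Set.mem_Icc.mp hmem)) (not_le.mpr hy)

private lemma nmem_Icc_abs {a b : ℝ} (h : a ∉ Set.Icc (-b) b) : b < |a| := by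
  by_contra hc
  push_neg at hc
  exact h (Set.mem_Icc.mpr (abs_le.mp hc))

private lemma bond (R M : ℝ) (hR : 0 < R) (ζ : ℝ → ℝ) (hζc : Continuous ζ)
    (hζs : ∀ x, x ∉ Set.Icc (-R) R → ζ x = 0)
    (w : ℝ → ℝ) (hw : ContDiff ℝ 1 w) (hwsupp : HasCompactSupport w)
    (hM : ∀ x : ℝ, deriv w x ≠ 0 → |x| ≤ M)
    (ξ ρ : ℝ) (hρ : 0 < ρ) :
    Integrable (fun x => (∫ t in (0:ℝ)..1, ζ (ξ + t * ρ - x)) * deriv w x) volume ∧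
    (∫ x : ℝ, (∫ t in (0:ℝ)..1, ζ (ξ + t * ρ - x)) * deriv w x)
      = ρ⁻¹ * ((∫ x : ℝ, ζ (ξ + ρ - x) * w x) - (∫ x : ℝ, ζ (ξ - x) * w x)) := by
  have hζH : HasCompactSupport ζ := HasCompactSupport.intro isCompact_Icc hζs
  have hζL : MeasureTheory.LocallyIntegrable ζ volume :=
    (hζc.integrable_of_hasCompactSupport hζH).locallyIntegrable
  have hw'c : Continuous (deriv w) := hw.continuous_deriv le_rfl
  have hw'supp : HasCompactSupport (deriv w) := hwsupp.deriv
  set L : ℝ →L[ℝ] ℝ →L[ℝ] ℝ := ContinuousLinearMap.lsmul ℝ ℝ with hL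
  have hcw : ∀ g : ℝ → ℝ, ∀ s : ℝ, (ζ ⋆[L, volume] g) s = ∫ x : ℝ, ζ (s - x) * g x := by
    intro g s
    rw [convolution_eq_swap]
    simp [hL, ContinuousLinearMap.lsmul_apply, smul_eq_mul]
  -- product integrability
  set h : ℝ × ℝ → ℝ := fun p => ζ (ξ + p.2 * ρ - p.1) * deriv w p.1 with hh
  have hcont : Continuous h := by
    apply Continuous.mul _ (hw'c.comp continuous_fst)
    exact hζc.comp (by fun_prop)
  set T : ℝ := (R + |ξ| + M) / ρ with hT
  have hhsupp : HasCompactSupport h := by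
    apply HasCompactSupport.intro
      (isCompact_Icc.prod isCompact_Icc :
        IsCompact ((Set.Icc (-M) M) ×ˢ (Set.Icc (-T) T)))
    rintro ⟨x, t⟩ hp
    rw [Set.mem_prod, not_and_or] at hp
    rcases hp with hx | ht
    · have hx' : M < |x| := nmem_Icc_abs hx
      have : deriv w x = 0 := by
        by_contra hx0
        exact absurd (hM x hx0) (not_le.mpr hx')
      simp [hh, this]
    · by_cases hx : x ∈ Set.Icc (-M) M
      · have hxM : |x| ≤ M := abs_le.mpr hx
        have hTt : T < |t| := nmem_Icc_abs ht
        have h1 : R + |ξ| + M < |t| * ρ := (div_lt_iff₀ hρ).mp hTt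
        have h2 : |t * ρ| = |t| * ρ := by
          rw [abs_mul, abs_of_pos hρ]
        have h3 : |t * ρ| - |ξ + t * ρ - x| ≤ |t * ρ - (ξ + t * ρ - x)| :=
          abs_sub_abs_le_abs_sub _ _
        have h4 : t * ρ - (ξ + t * ρ - x) = x - ξ := by ring
        have h5 : |x - ξ| ≤ |x| + |ξ| := abs_sub x ξ
        rw [h4] at h3
        have key : R < |ξ + t * ρ - x| := by
          have := h2 ▸ h1
          linarith
        have : ζ (ξ + t * ρ - x) = 0 := zeta_zero hζs key
        simp [hh, this]
      · have hx' : M < |x| := nmem_Icc_abs hx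
        have : deriv w x = 0 := by
          by_contra hx0
          exact absurd (hM x hx0) (not_le.mpr hx')
        simp [hh, this]
  have hInt2 : Integrable h (volume.prod volume) :=
    hcont.integrable_of_hasCompactSupport hhsupp
  have hmeq : (volume : Measure ℝ).prod (volume.restrict (Set.Ioc (0:ℝ) 1))
      = ((volume : Measure ℝ).prod volume).restrict (Set.univ ×ˢ Set.Ioc (0:ℝ) 1) := by
    rw [← Measure.prod_restrict, Measure.restrict_univ]
  have hIntR : Integrable h ((volume : Measure ℝ).prod (volume.restrict (Set.Ioc (0:ℝ) 1))) := by
    rw [hmeq]; exact hInt2.restrict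
  have hpt : ∀ x : ℝ, (∫ t in (0:ℝ)..1, ζ (ξ + t * ρ - x)) * deriv w x
      = ∫ t in Set.Ioc (0:ℝ) 1, ζ (ξ + t * ρ - x) * deriv w x := by
    intro x
    rw [intervalIntegral.integral_of_le zero_le_one, ← integral_mul_const]
  have hint1 : Integrable (fun x => (∫ t in (0:ℝ)..1, ζ (ξ + t * ρ - x)) * deriv w x) volume := by
    have h0 := hIntR.integral_prod_left
    exact h0.congr (Filter.Eventually.of_forall fun x => (hpt x).symm)
  refine ⟨hint1, ?_⟩
  have hswap : (∫ x : ℝ, ∫ t in Set.Ioc (0:ℝ) 1, ζ (ξ + t * ρ - x) * deriv w x)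
      = ∫ t in Set.Ioc (0:ℝ) 1, ∫ x : ℝ, ζ (ξ + t * ρ - x) * deriv w x :=
    MeasureTheory.integral_integral_swap
      (f := fun x t => ζ (ξ + t * ρ - x) * deriv w x) hIntR
  have hG : Continuous (ζ ⋆[L, volume] deriv w) :=
    HasCompactSupport.continuous_convolution_right L hw'supp hζL hw'c
  have hder : ∀ s : ℝ, HasDerivAt (ζ ⋆[L, volume] w) ((ζ ⋆[L, volume] deriv w) s) s :=
    fun s => HasCompactSupport.hasDerivAt_convolution_right L hζL hwsupp hw s
  have hftc : (∫ s in ξ..(ξ + ρ), (ζ ⋆[L, volume] deriv w) s)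
      = (ζ ⋆[L, volume] w) (ξ + ρ) - (ζ ⋆[L, volume] w) ξ :=
    intervalIntegral.integral_eq_sub_of_hasDerivAt (fun s _ => hder s)
      (hG.intervalIntegrable _ _)
  have hsub : (∫ t in (0:ℝ)..1, (ζ ⋆[L, volume] deriv w) (ξ + t * ρ))
      = ρ⁻¹ * ∫ s in ξ..(ξ + ρ), (ζ ⋆[L, volume] deriv w) s := by
    have h1 := intervalIntegral.integral_comp_mul_right (a := (0:ℝ)) (b := 1)
      (fun s => (ζ ⋆[L, volume] deriv w) (ξ + s)) (ne_of_gt hρ)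
    simp only [zero_mul, one_mul, smul_eq_mul] at h1
    rw [h1, intervalIntegral.integral_comp_add_left, add_zero]
  calc (∫ x : ℝ, (∫ t in (0:ℝ)..1, ζ (ξ + t * ρ - x)) * deriv w x)
      = ∫ x : ℝ, ∫ t in Set.Ioc (0:ℝ) 1, ζ (ξ + t * ρ - x) * deriv w x :=
        integral_congr_ae (Filter.Eventually.of_forall hpt)
    _ = ∫ t in Set.Ioc (0:ℝ) 1, ∫ x : ℝ, ζ (ξ + t * ρ - x) * deriv w x := hswap
    _ = ∫ t in Set.Ioc (0:ℝ) 1, (ζ ⋆[L, volume] deriv w) (ξ + t * ρ) := by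
        refine integral_congr_ae (Filter.Eventually.of_forall fun t => ?_)
        exact (hcw (deriv w) (ξ + t * ρ)).symm
    _ = ∫ t in (0:ℝ)..1, (ζ ⋆[L, volume] deriv w) (ξ + t * ρ) :=
        (intervalIntegral.integral_of_le zero_le_one).symm
    _ = ρ⁻¹ * ∫ s in ξ..(ξ + ρ), (ζ ⋆[L, volume] deriv w) s := hsub
    _ = ρ⁻¹ * ((ζ ⋆[L, volume] w) (ξ + ρ) - (ζ ⋆[L, volume] w) ξ) := by rw [hftc]
    _ = ρ⁻¹ * ((∫ x : ℝ, ζ (ξ + ρ - x) * w x) - (∫ x : ℝ, ζ (ξ - x) * w x)) := by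
        rw [hcw w (ξ + ρ), hcw w ξ]

/-- Stress representation of the first variation of the atomistic energy
tested with the smoothed interpolant `ṽ = ζ ∗ w`:
`∑_{ξ,ρ} φ′_ρ(D_ρ u(ξ)) D_ρ ṽ(ξ) = ∫ S^a(u;x) w′(x) dx`. -/
theorem stmt_5 (R : ℝ) (hR : 0 < R) (ζ : ℝ → ℝ) (hζc : Continuous ζ)
    (hζe : ∀ x, ζ (-x) = ζ x)
    (hζs : ∀ x, x ∉ Set.Icc (-R) R → ζ x = 0)
    (𝓡 : Finset ℕ) (h𝓡 : ∀ ρ ∈ 𝓡, 0 < ρ)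
    (φ : ℕ → ℝ → ℝ) (hφ : ∀ ρ ∈ 𝓡, Differentiable ℝ (φ ρ))
    (u : ℤ → ℝ)
    (w : ℝ → ℝ) (hw : ContDiff ℝ 1 w) (hwsupp : HasCompactSupport w)
    (conv : ℝ → ℝ) (hconv : ∀ s, conv s = ∫ x : ℝ, ζ (s - x) * w x)
    (χ : ℤ → ℝ → ℝ → ℝ)
    (hχ : ∀ (ξ : ℤ) (ρ x : ℝ), χ ξ ρ x = ∫ t in (0:ℝ)..1, ζ ((ξ : ℝ) + t * ρ - x))
    (S : ℝ → ℝ)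
    (hS : ∀ x : ℝ, S x = ∑' ξ : ℤ, ∑ ρ ∈ 𝓡,
      (ρ : ℝ) * deriv (φ ρ) (u (ξ + (ρ : ℤ)) - u ξ) * χ ξ (ρ : ℝ) x) :
    ∑' ξ : ℤ, ∑ ρ ∈ 𝓡,
        deriv (φ ρ) (u (ξ + (ρ : ℤ)) - u ξ) * (conv ((ξ : ℝ) + (ρ : ℝ)) - conv (ξ : ℝ))
      = ∫ x : ℝ, S x * deriv w x := by
  classical
  obtain ⟨M0, hM0⟩ : ∃ M0, tsupport w ⊆ Metric.closedBall 0 M0 :=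
    (Metric.isBounded_iff_subset_closedBall 0).mp hwsupp.isBounded
  set M : ℝ := max M0 0 with hMdef
  have hMnn : (0:ℝ) ≤ M := le_max_right _ _
  have htsM : ∀ x : ℝ, x ∈ tsupport w → |x| ≤ M := by
    intro x hx
    have := hM0 hx
    rw [Metric.mem_closedBall, Real.dist_eq, sub_zero] at this
    exact this.trans (le_max_left _ _)
  have hwM : ∀ x : ℝ, M < |x| → w x = 0 := by
    intro x hx
    apply image_eq_zero_of_notMem_tsupport
    intro hmem
    exact absurd (htsM x hmem) (not_le.mpr hx)
  have hw'M : ∀ x : ℝ, deriv w x ≠ 0 → |x| ≤ M := by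
    intro x hx
    exact htsM x (support_deriv_subset (Function.mem_support.mpr hx))
  set B : ℝ := ∑ ρ ∈ 𝓡, (ρ : ℝ) with hBdef
  have hBnn : (0:ℝ) ≤ B := Finset.sum_nonneg fun i _ => Nat.cast_nonneg i
  have hρB : ∀ ρ ∈ 𝓡, (ρ : ℝ) ≤ B := fun ρ hρ =>
    Finset.single_le_sum (f := fun ρ : ℕ => (ρ : ℝ)) (fun i _ => Nat.cast_nonneg i) hρ
  have hconv0 : ∀ s : ℝ, M + R < |s| → conv s = 0 := by
    intro s hs
    rw [hconv]
    apply integral_eq_zero_of_ae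
    apply Filter.Eventually.of_forall
    intro x
    show ζ (s - x) * w x = 0
    by_cases hx : M < |x|
    · rw [hwM x hx, mul_zero]
    · push_neg at hx
      have h1 : |s| - |x| ≤ |s - x| := abs_sub_abs_le_abs_sub s x
      have h2 : R < |s - x| := by linarith
      rw [zeta_zero hζs h2, zero_mul]
  set N : ℤ := ⌈M + R + B⌉ + 1 with hNdef
  have hN : M + R + B < (N : ℝ) := by
    have := Int.le_ceil (M + R + B)
    push_cast [hNdef]
    linarith
  set I : Finset ℤ := Finset.Icc (-N) N with hIdef
  have hout : ∀ ξ : ℤ, ξ ∉ I → ((N:ℝ) < (ξ:ℝ) ∨ (ξ:ℝ) < -(N:ℝ)) := by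
    intro ξ hξ
    rw [hIdef, Finset.mem_Icc, not_and_or] at hξ
    rw [not_le, not_le] at hξ
    rcases hξ with h | h
    · right
      have h2 : (ξ:ℝ) < ((-N : ℤ) : ℝ) := by exact_mod_cast h
      simpa using h2
    · left; exact_mod_cast h
  -- vanishing of conv values for ξ outside I
  have hconvz : ∀ ξ : ℤ, ξ ∉ I → ∀ ρ ∈ 𝓡,
      conv ((ξ:ℝ) + (ρ:ℝ)) = 0 ∧ conv (ξ:ℝ) = 0 := by
    intro ξ hξ ρ hρ
    have hρnn : (0:ℝ) ≤ (ρ:ℝ) := Nat.cast_nonneg ρ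
    have hρB' := hρB ρ hρ
    rcases hout ξ hξ with h | h
    · constructor
      · apply hconv0
        have : M + R < (ξ:ℝ) + ρ := by linarith
        calc M + R < (ξ:ℝ) + ρ := this
          _ ≤ |(ξ:ℝ) + ρ| := le_abs_self _
      · apply hconv0
        calc M + R < (ξ:ℝ) := by linarith
          _ ≤ |(ξ:ℝ)| := le_abs_self _
    · constructor
      · apply hconv0
        have h1 : (ξ:ℝ) + ρ < -(M + R) := by linarith
        calc M + R < -((ξ:ℝ) + ρ) := by linarith
          _ ≤ |(ξ:ℝ) + ρ| := neg_le_abs _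
      · apply hconv0
        calc M + R < -(ξ:ℝ) := by linarith
          _ ≤ |(ξ:ℝ)| := neg_le_abs _
  -- LHS as a finite sum
  have hLHS : (∑' ξ : ℤ, ∑ ρ ∈ 𝓡,
        deriv (φ ρ) (u (ξ + (ρ : ℤ)) - u ξ) * (conv ((ξ : ℝ) + (ρ : ℝ)) - conv (ξ : ℝ)))
      = ∑ ξ ∈ I, ∑ ρ ∈ 𝓡,
        deriv (φ ρ) (u (ξ + (ρ : ℤ)) - u ξ) * (conv ((ξ : ℝ) + (ρ : ℝ)) - conv (ξ : ℝ)) := by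
    apply tsum_eq_sum
    intro ξ hξ
    apply Finset.sum_eq_zero
    intro ρ hρ
    obtain ⟨h1, h2⟩ := hconvz ξ hξ ρ hρ
    rw [h1, h2, sub_zero, mul_zero]
  -- RHS : pointwise finite sum representation
  have hSfin : ∀ x : ℝ, S x * deriv w x
      = (∑ ξ ∈ I, ∑ ρ ∈ 𝓡,
          (ρ : ℝ) * deriv (φ ρ) (u (ξ + (ρ : ℤ)) - u ξ) * χ ξ (ρ : ℝ) x) * deriv w x := by
    intro x
    by_cases hx : deriv w x = 0
    · rw [hx, mul_zero, mul_zero]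
    · have hxM : |x| ≤ M := hw'M x hx
      congr 1
      rw [hS x]
      apply tsum_eq_sum
      intro ξ hξ
      apply Finset.sum_eq_zero
      intro ρ hρm
      have hρpos : (0:ℝ) < (ρ:ℝ) := by exact_mod_cast h𝓡 ρ hρm
      have hρB' := hρB ρ hρm
      have hχ0 : χ ξ (ρ:ℝ) x = 0 := by
        rw [hχ, intervalIntegral.integral_of_le zero_le_one]
        apply setIntegral_eq_zero_of_forall_eq_zero
        intro t ht
        obtain ⟨ht0, ht1⟩ := ht
        apply zeta_zero hζs
        have hxl := (abs_le.mp hxM).1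
        have hxr := (abs_le.mp hxM).2
        rcases hout ξ hξ with h | h
        · have h1 : 0 ≤ t * ρ := mul_nonneg ht0.le hρpos.le
          calc R < (ξ:ℝ) + t * ρ - x := by linarith
            _ ≤ |(ξ:ℝ) + t * ρ - x| := le_abs_self _
        · have h1 : t * ρ ≤ B := by
            calc t * ρ ≤ 1 * ρ := by nlinarith
              _ = (ρ:ℝ) := one_mul _
              _ ≤ B := hρB'
          calc R < -((ξ:ℝ) + t * ρ - x) := by linarith
            _ ≤ |(ξ:ℝ) + t * ρ - x| := neg_le_abs _
      rw [hχ0, mul_zero]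
  -- per-bond facts
  have hbond := fun (ξ : ℤ) (ρ : ℕ) (hρm : ρ ∈ 𝓡) =>
    bond R M hR ζ hζc hζs w hw hwsupp hw'M ((ξ:ℤ):ℝ) ((ρ:ℕ):ℝ)
      (by exact_mod_cast h𝓡 ρ hρm)
  -- the summand functions
  set P : ℤ → ℕ → ℝ → ℝ := fun ξ ρ x =>
    (ρ : ℝ) * deriv (φ ρ) (u (ξ + (ρ : ℤ)) - u ξ) * χ ξ (ρ : ℝ) x * deriv w x with hPdef
  have hPint : ∀ ξ : ℤ, ∀ ρ ∈ 𝓡, Integrable (P ξ ρ) volume := by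
    intro ξ ρ hρm
    have h1 := (hbond ξ ρ hρm).1.const_mul
      ((ρ : ℝ) * deriv (φ ρ) (u (ξ + (ρ : ℤ)) - u ξ))
    apply h1.congr
    apply Filter.Eventually.of_forall
    intro x
    rw [hPdef]
    simp only
    rw [hχ]
    ring
  have hPval : ∀ ξ : ℤ, ∀ ρ ∈ 𝓡, (∫ x : ℝ, P ξ ρ x)
      = deriv (φ ρ) (u (ξ + (ρ : ℤ)) - u ξ) * (conv ((ξ : ℝ) + (ρ : ℝ)) - conv (ξ : ℝ)) := by
    intro ξ ρ hρm
    have hρpos : (0:ℝ) < (ρ:ℝ) := by exact_mod_cast h𝓡 ρ hρm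
    have e1 : (∫ x : ℝ, P ξ ρ x)
        = ∫ x : ℝ, ((ρ : ℝ) * deriv (φ ρ) (u (ξ + (ρ : ℤ)) - u ξ)) *
            ((∫ t in (0:ℝ)..1, ζ ((ξ:ℝ) + t * (ρ:ℝ) - x)) * deriv w x) := by
      apply integral_congr_ae
      apply Filter.Eventually.of_forall
      intro x
      rw [hPdef]
      simp only
      rw [hχ]
      ring
    rw [e1, integral_const_mul, (hbond ξ ρ hρm).2, ← hconv, ← hconv]
    field_simp
  -- assemble RHS
  have hRHS : (∫ x : ℝ, S x * deriv w x)
      = ∑ ξ ∈ I, ∑ ρ ∈ 𝓡, ∫ x : ℝ, P ξ ρ x := by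
    calc (∫ x : ℝ, S x * deriv w x)
        = ∫ x : ℝ, ∑ ξ ∈ I, ∑ ρ ∈ 𝓡, P ξ ρ x := by
          apply integral_congr_ae
          apply Filter.Eventually.of_forall
          intro x
          show S x * deriv w x = ∑ ξ ∈ I, ∑ ρ ∈ 𝓡, P ξ ρ x
          rw [hSfin x, Finset.sum_mul]
          refine Finset.sum_congr rfl fun ξ _ => ?_
          rw [Finset.sum_mul]
      _ = ∑ ξ ∈ I, ∫ x : ℝ, ∑ ρ ∈ 𝓡, P ξ ρ x :=
          integral_finset_sum I fun ξ _ =>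
            integrable_finset_sum 𝓡 fun ρ hρ => hPint ξ ρ hρ
      _ = ∑ ξ ∈ I, ∑ ρ ∈ 𝓡, ∫ x : ℝ, P ξ ρ x :=
          Finset.sum_congr rfl fun ξ _ =>
            integral_finset_sum 𝓡 fun ρ hρ => hPint ξ ρ hρ
  rw [hLHS, hRHS]
  refine Finset.sum_congr rfl fun ξ _ => Finset.sum_congr rfl fun ρ hρ => ?_
  rw [hPval ξ ρ hρ]
end

section
/- Let n ≥ 1 and let ζ : ℝ → ℝ be a continuous even function with compact support contained in [−R, R] (R > 0), bounded by M := sup_ℝ |ζ|, and satisfying the moment conditions of order n − 1: for every y ∈ ℝ and every integer j with 0 ≤ j ≤ n − 1, ∑_{ξ∈ℤ} ζ(ξ − y)(ξ − y)^j equals 1 if j = 0 and equals 0 if 1 ≤ j ≤ n − 1. Then for every f : ℝ → ℝ which is n times continuously differentiable and every x ∈ ℝ, |f(x) − ∑_{ξ∈ℤ} ζ(x − ξ) f(ξ)| ≤ (2R + 1) · M · (Rⁿ/n!) · sup_{|y − x| ≤ R} |f⁽ⁿ⁾(y)|. -/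
/-!
The moment conditions say that the weights `ζ (x - ξ)` reproduce polynomials of degree `< n`
centred at `x`, so applied to the Taylor polynomial `T` of `f` at `x` they return `T x = f x`.
Hence the error is `∑ ξ, ζ (x - ξ) * (T ξ - f ξ)`, a sum over the at most `2R + 1` integers
with `|ξ - x| ≤ R`, each term bounded by `M` times the Lagrange remainder `C R ^ n / n!`.
-/

open Finset Nat

lemma abs_sub_taylor_le {f : ℝ → ℝ} {m : ℕ} (hf : ContDiff ℝ (m + 1) f) {x₀ x C : ℝ}
    (hC : ∀ y ∈ Set.uIcc x₀ x, |iteratedDeriv (m + 1) f y| ≤ C) :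
    |f x - ∑ j ∈ range (m + 1), iteratedDeriv j f x₀ / j ! * (x - x₀) ^ j|
      ≤ C * |x - x₀| ^ (m + 1) / (m + 1)! := by
  rcases eq_or_ne x₀ x with rfl | hne
  · simp [sum_range_succ']
  obtain ⟨y, hy, hrem⟩ := taylor_mean_remainder_lagrange_iteratedDeriv hne hf.contDiffOn
  have htaylor : taylorWithinEval f m (Set.uIcc x₀ x) x₀ x
      = ∑ j ∈ range (m + 1), iteratedDeriv j f x₀ / j ! * (x - x₀) ^ j := by
    rw [taylor_within_apply]
    refine sum_congr rfl fun j hj => ?_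
    rw [iteratedDerivWithin_eq_iteratedDeriv (uniqueDiffOn_uIcc hne)
      (hf.contDiffAt.of_le (by exact_mod_cast (mem_range.1 hj).le)) Set.left_mem_uIcc,
      smul_eq_mul]
    ring
  rw [← htaylor, hrem, abs_div, abs_mul, abs_pow, Nat.abs_cast]
  gcongr
  exact hC y (Set.uIoo_subset_uIcc_self hy)

lemma sum_mul_sum_pow_eq_of_moments {ι : Type*} {S : Finset ι} {w t : ι → ℝ} {m : ℕ}
    (hmom : ∀ j ≤ m, ∑ i ∈ S, w i * t i ^ j = if j = 0 then 1 else 0) (c : ℕ → ℝ) :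
    ∑ i ∈ S, w i * ∑ j ∈ range (m + 1), c j * t i ^ j = c 0 := by
  simp_rw [mul_sum, mul_left_comm (w _)]
  rw [sum_comm]
  simp_rw [← mul_sum]
  rw [sum_congr rfl fun j hj => by rw [hmom j (Nat.lt_succ_iff.1 (mem_range.1 hj))]]
  simp

lemma abs_sub_sum_mul_le_of_moments {ι : Type*} {S : Finset ι} {w t g : ι → ℝ} {m : ℕ}
    (hmom : ∀ j ≤ m, ∑ i ∈ S, w i * t i ^ j = if j = 0 then 1 else 0) (c : ℕ → ℝ) {A B : ℝ}
    (hw : ∀ i ∈ S, |w i| ≤ A) (hg : ∀ i ∈ S, |g i - ∑ j ∈ range (m + 1), c j * t i ^ j| ≤ B) :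
    |c 0 - ∑ i ∈ S, w i * g i| ≤ #S * (A * B) := by
  rw [← sum_mul_sum_pow_eq_of_moments hmom c, ← sum_sub_distrib]
  calc |∑ i ∈ S, (w i * ∑ j ∈ range (m + 1), c j * t i ^ j - w i * g i)|
      ≤ ∑ i ∈ S, |w i * ∑ j ∈ range (m + 1), c j * t i ^ j - w i * g i| :=
        abs_sum_le_sum_abs _ _
    _ ≤ #S * (A * B) := by
        rw [← nsmul_eq_mul]
        refine sum_le_card_nsmul _ _ _ fun i hi => ?_
        rw [← mul_sub, abs_mul, abs_sub_comm]
        exact mul_le_mul (hw i hi) (hg i hi) (abs_nonneg _) ((abs_nonneg _).trans (hw i hi))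

lemma Int.mem_Icc_ceil_floor {a b : ℝ} {ξ : ℤ} : ξ ∈ Icc ⌈a⌉ ⌊b⌋ ↔ (ξ : ℝ) ∈ Set.Icc a b := by
  rw [Finset.mem_Icc, Int.ceil_le, Int.le_floor, Set.mem_Icc]

lemma Int.card_Icc_ceil_floor_le {a b : ℝ} (hab : a ≤ b + 1) :
    (#(Icc ⌈a⌉ ⌊b⌋) : ℝ) ≤ b - a + 1 := by
  have hcard : (#(Icc ⌈a⌉ ⌊b⌋) : ℝ) = max ((⌊b⌋ + 1 - ⌈a⌉ : ℤ) : ℝ) 0 := by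
    rw [Int.card_Icc, ← Int.cast_natCast, Int.toNat_eq_max, Int.cast_max, Int.cast_zero]
  rw [hcard]
  push_cast
  exact max_le (by linarith [Int.floor_le b, Int.le_ceil a]) (by linarith)

lemma tsum_int_eq_sum_Icc_ceil_floor {g : ℤ → ℝ} {a b : ℝ}
    (hg : ∀ ξ : ℤ, (ξ : ℝ) ∉ Set.Icc a b → g ξ = 0) : ∑' ξ, g ξ = ∑ ξ ∈ Icc ⌈a⌉ ⌊b⌋, g ξ :=
  tsum_eq_sum fun ξ hξ => hg ξ (Int.mem_Icc_ceil_floor.not.1 hξ)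

theorem stmt_7_general (n : ℕ) (hn : 1 ≤ n) (R : ℝ) (hR : 0 < R)
    (ζ : ℝ → ℝ) (hζe : ∀ x, ζ (-x) = ζ x)
    (hζs : ∀ x, x ∉ Set.Icc (-R) R → ζ x = 0)
    (M : ℝ) (hM : ∀ x, |ζ x| ≤ M)
    (hmom : ∀ (y : ℝ) (j : ℕ), j ≤ n - 1 →
      ∑' ξ : ℤ, ζ ((ξ : ℝ) - y) * ((ξ : ℝ) - y) ^ j = if j = 0 then 1 else 0)
    (f : ℝ → ℝ) (hf : ContDiff ℝ n f) (x : ℝ) (C : ℝ)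
    (hC : ∀ y : ℝ, |y - x| ≤ R → |iteratedDeriv n f y| ≤ C) :
    |f x - ∑' ξ : ℤ, ζ (x - (ξ : ℝ)) * f (ξ : ℝ)|
      ≤ (2 * R + 1) * M * (R ^ n / n.factorial) * C := by
  obtain ⟨m, rfl⟩ : ∃ m, n = m + 1 := ⟨n - 1, by omega⟩
  have hM0 : 0 ≤ M := (abs_nonneg _).trans (hM 0)
  have hC0 : 0 ≤ C := (abs_nonneg _).trans (hC x (by simpa using hR.le))
  have hsupp : ∀ ξ : ℤ, (ξ : ℝ) ∉ Set.Icc (x - R) (x + R) → ζ (x - ξ) = 0 := fun ξ hξ =>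
    hζs _ fun h => hξ ⟨by linarith [h.2], by linarith [h.1]⟩
  have hmomS : ∀ j ≤ m, ∑ ξ ∈ Icc ⌈x - R⌉ ⌊x + R⌋, ζ (x - ξ) * ((ξ : ℝ) - x) ^ j
      = if j = 0 then 1 else 0 := by
    intro j hj
    rw [← hmom x j (by omega),
      tsum_int_eq_sum_Icc_ceil_floor fun ξ hξ => by rw [← neg_sub, hζe, hsupp ξ hξ, zero_mul]]
    exact sum_congr rfl fun ξ _ => by rw [← hζe, neg_sub]
  have htaylor : ∀ ξ ∈ Icc ⌈x - R⌉ ⌊x + R⌋,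
      |f ξ - ∑ j ∈ range (m + 1), iteratedDeriv j f x / j ! * ((ξ : ℝ) - x) ^ j|
        ≤ C * R ^ (m + 1) / (m + 1)! := by
    intro ξ hξ
    have hξx : |(ξ : ℝ) - x| ≤ R := by
      have := Int.mem_Icc_ceil_floor.1 hξ
      exact abs_sub_le_iff.2 ⟨by linarith [this.2], by linarith [this.1]⟩
    refine (abs_sub_taylor_le hf fun y hy => hC y ?_).trans (by gcongr)
    exact (Set.abs_sub_left_of_mem_uIcc hy).trans hξx
  rw [tsum_int_eq_sum_Icc_ceil_floor fun ξ hξ => by rw [hsupp ξ hξ, zero_mul]]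
  calc _ = |iteratedDeriv 0 f x / (0 ! : ℝ) - _| := by simp
    _ ≤ #(Icc ⌈x - R⌉ ⌊x + R⌋) * (M * (C * R ^ (m + 1) / (m + 1)!)) :=
        abs_sub_sum_mul_le_of_moments hmomS (fun j => iteratedDeriv j f x / j !)
          (fun ξ _ => hM _) htaylor
    _ ≤ (2 * R + 1) * (M * (C * R ^ (m + 1) / (m + 1)!)) := by
        gcongr
        exact (Int.card_Icc_ceil_floor_le (by linarith)).trans (by linarith)
    _ = _ := by ring

/-- Bramble–Hilbert-type pointwise error bound for the quasi-interpolant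
`∑_{ξ∈ℤ} ζ(x − ξ) f(ξ)` built from a basis function satisfying moment
conditions of order `n − 1`. -/
theorem stmt_7 (n : ℕ) (hn : 1 ≤ n) (R : ℝ) (hR : 0 < R)
    (ζ : ℝ → ℝ) (hζc : Continuous ζ) (hζe : ∀ x, ζ (-x) = ζ x)
    (hζs : ∀ x, x ∉ Set.Icc (-R) R → ζ x = 0)
    (M : ℝ) (hM : ∀ x, |ζ x| ≤ M)
    (hmom : ∀ (y : ℝ) (j : ℕ), j ≤ n - 1 →
      ∑' ξ : ℤ, ζ ((ξ : ℝ) - y) * ((ξ : ℝ) - y) ^ j = if j = 0 then 1 else 0)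
    (f : ℝ → ℝ) (hf : ContDiff ℝ n f) (x : ℝ) (C : ℝ)
    (hC : ∀ y : ℝ, |y - x| ≤ R → |iteratedDeriv n f y| ≤ C) :
    |f x - ∑' ξ : ℤ, ζ (x - (ξ : ℝ)) * f (ξ : ℝ)|
      ≤ (2 * R + 1) * M * (R ^ n / n.factorial) * C :=
  stmt_7_general n hn R hR ζ hζe hζs M hM hmom f hf x C hC
end

section
/- Let ζ : ℝ → ℝ be a continuous even function with compact support contained in [−R, R] (R > 0), satisfying the moment conditions of order 1: for every y ∈ ℝ, ∑_{ξ∈ℤ} ζ(ξ − y)(ξ − y)^j equals 1 if j = 0 and equals 0 if j = 1. Define χ_{ξ,ρ}(x) := ∫₀¹ ζ(ξ + tρ − x) dt. Then for every x ∈ ℝ and every ρ ∈ ℝ: ∑_{ξ∈ℤ} χ_{ξ,ρ}(x) = 1 and ∑_{ξ∈ℤ} (ξ − x) χ_{ξ,ρ}(x) = −ρ/2. -/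
open MeasureTheory

/-- Zeroth and first moment identities for the bond weight function:
`∑_ξ χ_{ξ,ρ}(x) = 1` (partition of unity) and
`∑_ξ (ξ − x) χ_{ξ,ρ}(x) = −ρ/2`. -/
theorem stmt_15 (R : ℝ) (hR : 0 < R) (ζ : ℝ → ℝ) (hζc : Continuous ζ)
    (hζe : ∀ x, ζ (-x) = ζ x)
    (hζs : ∀ x, x ∉ Set.Icc (-R) R → ζ x = 0)
    (hmom : ∀ (y : ℝ) (j : ℕ), j ≤ 1 →
      ∑' ξ : ℤ, ζ ((ξ : ℝ) - y) * ((ξ : ℝ) - y) ^ j = if j = 0 then 1 else 0)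
    (χ : ℤ → ℝ → ℝ → ℝ)
    (hχ : ∀ (ξ : ℤ) (ρ x : ℝ), χ ξ ρ x = ∫ t in (0:ℝ)..1, ζ ((ξ : ℝ) + t * ρ - x)) :
    ∀ (x ρ : ℝ),
      (∑' ξ : ℤ, χ ξ ρ x = 1) ∧
      (∑' ξ : ℤ, ((ξ : ℝ) - x) * χ ξ ρ x = -ρ / 2) := by
  intro x ρ
  set S : Finset ℤ := Finset.Icc (⌊x - |ρ| - R⌋ - 1) (⌈x + |ρ| + R⌉ + 1) with hS
  have hzero : ∀ ξ : ℤ, ξ ∉ S → ∀ t : ℝ, t ∈ Set.Icc (0:ℝ) 1 →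
      ζ ((ξ:ℝ) + t * ρ - x) = 0 := by
    intro ξ hξ t ht
    apply hζs
    intro hmem
    apply hξ
    rw [hS, Finset.mem_Icc]
    rw [Set.mem_Icc] at hmem ht
    have habs : |t * ρ| ≤ |ρ| := by
      rw [abs_mul]
      calc |t| * |ρ| ≤ 1 * |ρ| := by
            apply mul_le_mul_of_nonneg_right _ (abs_nonneg ρ)
            rw [abs_le]; exact ⟨by linarith [ht.1], ht.2⟩
        _ = |ρ| := one_mul _
    have h1 : -|ρ| ≤ t * ρ := by
      have := neg_abs_le (t * ρ); linarith
    have h2 : t * ρ ≤ |ρ| := le_trans (le_abs_self _) habs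
    constructor
    · have hf := Int.floor_le (x - |ρ| - R)
      have : ((⌊x - |ρ| - R⌋ - 1 : ℤ) : ℝ) ≤ (ξ : ℝ) := by
        push_cast; linarith [hmem.1]
      exact_mod_cast this
    · have hc := Int.le_ceil (x + |ρ| + R)
      have : (ξ : ℝ) ≤ ((⌈x + |ρ| + R⌉ + 1 : ℤ) : ℝ) := by
        push_cast; linarith [hmem.2]
      exact_mod_cast this
  have hcont : ∀ ξ : ℤ, Continuous fun t : ℝ => ζ ((ξ:ℝ) + t * ρ - x) := by
    intro ξ; exact hζc.comp (by continuity)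
  have hint : ∀ (c : ℝ) (ξ : ℤ),
      IntervalIntegrable (fun t => c * ζ ((ξ:ℝ) + t * ρ - x)) volume 0 1 :=
    fun c ξ => ((continuous_const.mul (hcont ξ)).intervalIntegrable 0 1)
  have hχ0 : ∀ ξ : ℤ, ξ ∉ S → χ ξ ρ x = 0 := by
    intro ξ hξ
    rw [hχ]
    have hEq : Set.EqOn (fun t => ζ ((ξ:ℝ) + t * ρ - x)) (fun _ => (0:ℝ))
        (Set.uIcc (0:ℝ) 1) := by
      intro t ht
      rw [Set.uIcc_of_le (by norm_num : (0:ℝ) ≤ 1)] at ht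
      exact hzero ξ hξ t ht
    rw [intervalIntegral.integral_congr hEq]
    simp
  have key : ∀ w : ℤ → ℝ,
      ∑' ξ : ℤ, w ξ * χ ξ ρ x
        = ∫ t in (0:ℝ)..1, ∑ ξ ∈ S, w ξ * ζ ((ξ:ℝ) + t * ρ - x) := by
    intro w
    rw [tsum_eq_sum (s := S) (fun ξ hξ => by rw [hχ0 ξ hξ, mul_zero])]
    rw [intervalIntegral.integral_finset_sum (fun ξ _ => hint (w ξ) ξ)]
    refine Finset.sum_congr rfl (fun ξ _ => ?_)
    rw [hχ, ← intervalIntegral.integral_const_mul]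
  have hsum0 : ∀ t ∈ Set.Icc (0:ℝ) 1, ∑ ξ ∈ S, ζ ((ξ:ℝ) + t * ρ - x) = 1 := by
    intro t ht
    have h := hmom (x - t * ρ) 0 (by norm_num)
    simp only [pow_zero, mul_one, if_pos] at h
    have harg : ∀ ξ : ℤ, (ξ:ℝ) - (x - t * ρ) = (ξ:ℝ) + t * ρ - x := fun ξ => by ring
    simp_rw [harg] at h
    rw [tsum_eq_sum (s := S) (fun ξ hξ => hzero ξ hξ t ht)] at h
    exact h
  have hsum1 : ∀ t ∈ Set.Icc (0:ℝ) 1,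
      ∑ ξ ∈ S, ((ξ:ℝ) - x) * ζ ((ξ:ℝ) + t * ρ - x) = -(t * ρ) := by
    intro t ht
    have h := hmom (x - t * ρ) 1 le_rfl
    simp only [pow_one, if_neg (by norm_num : (1:ℕ) ≠ 0)] at h
    have harg : ∀ ξ : ℤ, (ξ:ℝ) - (x - t * ρ) = (ξ:ℝ) + t * ρ - x := fun ξ => by ring
    simp_rw [harg] at h
    rw [tsum_eq_sum (s := S)
      (fun ξ hξ => by rw [hzero ξ hξ t ht, zero_mul])] at h
    have hre : ∀ ξ ∈ S, ((ξ:ℝ) - x) * ζ ((ξ:ℝ) + t * ρ - x)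
        = ζ ((ξ:ℝ) + t * ρ - x) * ((ξ:ℝ) + t * ρ - x)
          - t * ρ * ζ ((ξ:ℝ) + t * ρ - x) := fun ξ _ => by ring
    rw [Finset.sum_congr rfl hre, Finset.sum_sub_distrib, h, ← Finset.mul_sum,
      hsum0 t ht]
    ring
  constructor
  · have hk := key (fun _ => 1)
    simp only [one_mul] at hk
    rw [hk, intervalIntegral.integral_congr (g := fun _ => (1:ℝ))
      (fun t ht => hsum0 t (by rwa [Set.uIcc_of_le (by norm_num : (0:ℝ) ≤ 1)] at ht))]
    simp
  · rw [key (fun ξ => (ξ:ℝ) - x),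
      intervalIntegral.integral_congr (g := fun t => -(t * ρ))
      (fun t ht => hsum1 t (by rwa [Set.uIcc_of_le (by norm_num : (0:ℝ) ≤ 1)] at ht))]
    rw [intervalIntegral.integral_neg]
    rw [intervalIntegral.integral_mul_const, integral_id]
    norm_num
    ring
end
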